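/- arXiv:1707.00230 — 3 statements merged into one kernel-verified Lean document; each statement's English description precedes it below -/
import Mathlib

section
/- For every fixed k ≥ 1 and all sufficiently large m: C(m^5, m) · C(m^5 − m^2, m^4 − m^2) · m^k < C(m^5, m^4). Equivalently, a polynomial number of queries, each ruling out at most C(m^5 − m^2, m^4 − m^2) of the C(m^5, m^4) possible placements of 1's, cannot rule out all placements. -/
/-
A fixed set of `r` positions lies inside exactly `C(n - r, N - r)` of the `C(n, N)` sets of
`N` positions, a fraction `C(N, r) / C(n, r)` of them. With `n = m^5`, `N = m^4`, `r = m^2`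
every factor of `C(N, r) / C(n, r) = ∏_{i<r} (N - i) / (n - i)` is at most `1/m`, so the
fraction is at most `m^(-m^2)`, while `C(m^5, m) · m^k ≤ m^(5m + k)` is eventually smaller
than `m^(m^2)`.
-/

namespace Nat

theorem pow_mul_descFactorial_le (c n r : ℕ) :
    c ^ r * n.descFactorial r ≤ (c * n).descFactorial r := by
  induction r with
  | zero => simp
  | succ r ih =>
    have hfactor : c * (n - r) ≤ c * n - r := by
      rcases c.eq_zero_or_pos with rfl | hc
      · simp
      · rw [Nat.mul_sub]
        have : r ≤ c * r := Nat.le_mul_of_pos_left r hc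
        omega
    calc c ^ (r + 1) * n.descFactorial (r + 1)
        = c * (n - r) * (c ^ r * n.descFactorial r) := by
          rw [descFactorial_succ, pow_succ]; ring
      _ ≤ (c * n - r) * (c * n).descFactorial r := Nat.mul_le_mul hfactor ih
      _ = (c * n).descFactorial (r + 1) := (descFactorial_succ _ _).symm

theorem pow_mul_choose_le (c n r : ℕ) : c ^ r * n.choose r ≤ (c * n).choose r := by
  refine Nat.le_of_mul_le_mul_left ?_ (factorial_pos r)
  calc r ! * (c ^ r * n.choose r) = c ^ r * n.descFactorial r := by
        rw [descFactorial_eq_factorial_mul_choose]; ring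
    _ ≤ (c * n).descFactorial r := pow_mul_descFactorial_le c n r
    _ = r ! * (c * n).choose r := descFactorial_eq_factorial_mul_choose _ _

theorem mul_choose_sub_lt_choose {a n N r : ℕ} (hrN : r ≤ N) (hNn : N ≤ n)
    (h : a * N.choose r < n.choose r) : a * (n - r).choose (N - r) < n.choose N := by
  refine Nat.lt_of_mul_lt_mul_right (a := N.choose r) ?_
  have hpos : 0 < (n - r).choose (N - r) := choose_pos (by omega)
  calc a * (n - r).choose (N - r) * N.choose r
      = a * N.choose r * (n - r).choose (N - r) := mul_right_comm _ _ _
    _ < n.choose r * (n - r).choose (N - r) := Nat.mul_lt_mul_of_pos_right h hpos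
    _ = n.choose N * N.choose r := (choose_mul hrN).symm

end Nat

theorem choose_pow_five_mul_pow_lt_pow_sq {k m : ℕ} (hm : k + 6 ≤ m) :
    (m ^ 5).choose m * m ^ k < m ^ (m ^ 2) := by
  calc (m ^ 5).choose m * m ^ k ≤ (m ^ 5) ^ m * m ^ k :=
        Nat.mul_le_mul_right _ (Nat.choose_le_pow _ _)
    _ = m ^ (5 * m + k) := by rw [← pow_mul, ← pow_add]
    _ < m ^ (m ^ 2) := Nat.pow_lt_pow_right (by omega) (by nlinarith)

theorem stmt6_general (k : ℕ) :
    ∃ M : ℕ, ∀ m ≥ M,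
      Nat.choose (m ^ 5) m * Nat.choose (m ^ 5 - m ^ 2) (m ^ 4 - m ^ 2) * m ^ k <
        Nat.choose (m ^ 5) (m ^ 4) := by
  refine ⟨k + 6, fun m hm => ?_⟩
  have hm1 : 1 ≤ m := by omega
  have hfraction : (m ^ 5).choose m * m ^ k * (m ^ 4).choose (m ^ 2) < (m ^ 5).choose (m ^ 2) :=
    calc (m ^ 5).choose m * m ^ k * (m ^ 4).choose (m ^ 2)
        < m ^ (m ^ 2) * (m ^ 4).choose (m ^ 2) :=
          Nat.mul_lt_mul_of_pos_right (choose_pow_five_mul_pow_lt_pow_sq hm)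
            (Nat.choose_pos (Nat.pow_le_pow_right hm1 (by norm_num)))
      _ ≤ (m * m ^ 4).choose (m ^ 2) := Nat.pow_mul_choose_le m (m ^ 4) (m ^ 2)
      _ = (m ^ 5).choose (m ^ 2) := by ring_nf
  rw [mul_right_comm]
  exact Nat.mul_choose_sub_lt_choose (Nat.pow_le_pow_right hm1 (by norm_num))
    (Nat.pow_le_pow_right hm1 (by norm_num)) hfraction

/-- For every fixed `k` and all sufficiently large `m`:
`C(m^5, m) · C(m^5 - m^2, m^4 - m^2) · m^k < C(m^5, m^4)`. -/
theorem stmt6 (k : ℕ) (hk : 1 ≤ k) :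
    ∃ M : ℕ, ∀ m ≥ M,
      Nat.choose (m ^ 5) m * Nat.choose (m ^ 5 - m ^ 2) (m ^ 4 - m ^ 2) * m ^ k <
        Nat.choose (m ^ 5) (m ^ 4) :=
  stmt6_general k
end

section
/- Worst-case approximation ratio of the two-block algorithm in Theorem 4: let n = 2m, l < h with l, h > 0, and let F be the downward closure of {(0^m,1^m), (1^m,0^m)} ⊆ {0,1}^{2m}. Define A : {l,h}^{2m} → F by A(v) = (0^m,1^m) if v has at most m + f h's (for a fixed threshold 0 ≤ f < m/2), and A(v) = (1^m,0^m) otherwise. Then approx_F(A) = min_v (v·A(v))/OPT_F(v) = l/h, achieved at v = (h^m, l^m). -/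
/-! For `v ∈ {l,h}^{2m}` each half of `v` sums to between `m l` and `m h`, so `OPT v ≤ m h`
while whichever half `A` picks has value at least `m l`. At `v = (h^m, l^m)` the number of `h`'s
is `m`, below the threshold, so `A` picks the half worth `m l` while `OPT v = m h`. -/

open Finset

noncomputable def dot {n : ℕ} (v x : Fin n → ℝ) : ℝ := ∑ i, v i * x i

lemma dot_boole {n : ℕ} (v : Fin n → ℝ) (p : Fin n → Prop) [DecidablePred p] :
    dot v (fun i => if p i then 1 else 0) = ∑ i with p i, v i := by
  simp only [dot, mul_ite, mul_one, mul_zero, sum_filter]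

lemma sum_mem_Icc_of_forall_mem_Icc {ι : Type*} (s : Finset ι) {v : ι → ℝ} {a b : ℝ}
    (hv : ∀ i ∈ s, v i ∈ Set.Icc a b) : ∑ i ∈ s, v i ∈ Set.Icc (#s * a) (#s * b) := by
  rw [← nsmul_eq_mul, ← nsmul_eq_mul]
  exact ⟨card_nsmul_le_sum s v a fun i hi => (hv i hi).1,
    sum_le_card_nsmul s v b fun i hi => (hv i hi).2⟩

lemma div_mul_max_le_min {l h k a b : ℝ} (hl : 0 ≤ l) (hh : 0 < h)
    (ha : a ∈ Set.Icc (k * l) (k * h)) (hb : b ∈ Set.Icc (k * l) (k * h)) :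
    l / h * max a b ≤ min a b :=
  calc l / h * max a b ≤ l / h * (k * h) := by gcongr; exact max_le ha.2 hb.2
    _ = k * l := by field_simp
    _ ≤ min a b := le_min ha.1 hb.1

section Halves

variable {m : ℕ}

lemma card_filter_val_lt_two_mul : #{i : Fin (2 * m) | (i : ℕ) < m} = m := by
  rw [Fin.card_filter_val_lt]
  omega

lemma card_filter_not_val_lt_two_mul : #{i : Fin (2 * m) | ¬(i : ℕ) < m} = m := by
  have := card_filter_add_card_filter_not (s := univ) fun i : Fin (2 * m) => (i : ℕ) < m
  rw [card_filter_val_lt_two_mul, card_univ, Fintype.card_fin] at this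
  omega

lemma sum_filter_val_lt_mem_Icc {v : Fin (2 * m) → ℝ} {a b : ℝ} (hv : ∀ i, v i ∈ Set.Icc a b) :
    ∑ i ∈ {i : Fin (2 * m) | (i : ℕ) < m}, v i ∈ Set.Icc (m * a) (m * b) := by
  have := sum_mem_Icc_of_forall_mem_Icc {i : Fin (2 * m) | (i : ℕ) < m} fun i _ => hv i
  rwa [card_filter_val_lt_two_mul] at this

lemma sum_filter_not_val_lt_mem_Icc {v : Fin (2 * m) → ℝ} {a b : ℝ}
    (hv : ∀ i, v i ∈ Set.Icc a b) :
    ∑ i ∈ {i : Fin (2 * m) | ¬(i : ℕ) < m}, v i ∈ Set.Icc (m * a) (m * b) := by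
  have := sum_mem_Icc_of_forall_mem_Icc {i : Fin (2 * m) | ¬(i : ℕ) < m} fun i _ => hv i
  rwa [card_filter_not_val_lt_two_mul] at this

lemma sum_filter_val_lt_ite (a b : ℝ) :
    ∑ i ∈ {i : Fin (2 * m) | (i : ℕ) < m}, (if (i : ℕ) < m then a else b) = m * a := by
  rw [sum_ite_of_true fun i hi => (mem_filter.1 hi).2, sum_const, card_filter_val_lt_two_mul,
    nsmul_eq_mul]

lemma sum_filter_not_val_lt_ite (a b : ℝ) :
    ∑ i ∈ {i : Fin (2 * m) | ¬(i : ℕ) < m}, (if (i : ℕ) < m then a else b) = m * b := by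
  rw [sum_ite_of_false fun i hi => (mem_filter.1 hi).2, sum_const, card_filter_not_val_lt_two_mul,
    nsmul_eq_mul]

end Halves

theorem stmt11_general (m f : ℕ)
    (l h : ℝ) (hl : 0 < l) (hlh : l < h)
    (D1 D2 : Fin (2 * m) → ℝ)
    (hD1 : ∀ i : Fin (2 * m), D1 i = if (i : ℕ) < m then 0 else 1)
    (hD2 : ∀ i : Fin (2 * m), D2 i = if (i : ℕ) < m then 1 else 0)
    (A : (Fin (2 * m) → ℝ) → (Fin (2 * m) → ℝ))
    (hA : ∀ v : Fin (2 * m) → ℝ,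
      A v = if (Finset.univ.filter (fun i => v i = h)).card ≤ m + f then D1 else D2)
    (OPT : (Fin (2 * m) → ℝ) → ℝ)
    (hOPT : ∀ v, OPT v = max (dot v D2) (dot v D1)) :
    (∀ v : Fin (2 * m) → ℝ, (∀ i, v i = l ∨ v i = h) →
      (l / h) * OPT v ≤ dot v (A v)) ∧
    (∃ v : Fin (2 * m) → ℝ, (∀ i, v i = l ∨ v i = h) ∧
      dot v (A v) = (l / h) * OPT v) := by
  have hD1 : D1 = fun i : Fin (2 * m) => if ¬(i : ℕ) < m then (1 : ℝ) else 0 :=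
    funext fun i => by rw [hD1, ite_not]
  have hD2 : D2 = fun i : Fin (2 * m) => if (i : ℕ) < m then (1 : ℝ) else 0 := funext hD2
  subst hD1 hD2
  simp only [dot_boole] at hOPT
  have hh : 0 < h := hl.trans hlh
  refine ⟨fun v hv => ?_, ?_⟩
  · have hv_mem : ∀ i, v i ∈ Set.Icc l h := fun i => by
      rcases hv i with hi | hi <;> simp [hi, hlh.le]
    rw [hOPT]
    refine (div_mul_max_le_min hl.le hh (sum_filter_val_lt_mem_Icc hv_mem)
      (sum_filter_not_val_lt_mem_Icc hv_mem)).trans ?_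
    rw [hA]
    split_ifs <;> simp only [dot_boole, min_le_left, min_le_right]
  · have hcount : #{i : Fin (2 * m) | (if (i : ℕ) < m then h else l) = h} = m := by
      simp only [ite_eq_left_iff, hlh.ne, imp_false, not_not, card_filter_val_lt_two_mul]
    refine ⟨fun i => if (i : ℕ) < m then h else l, fun i => (ite_eq_or_eq _ _ _).symm, ?_⟩
    rw [hA, if_pos (hcount.trans_le (Nat.le_add_right m f)), dot_boole, hOPT, sum_filter_val_lt_ite,
      sum_filter_not_val_lt_ite, max_eq_left (by gcongr)]
    field_simp

/-- The two-block algorithm of Theorem 4 has worst-case approximation ratio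
exactly `l/h`: every input achieves ratio at least `l/h`, and some input in
`{l,h}^{2m}` achieves it with equality. -/
theorem stmt11 (m f : ℕ) (hm : 0 < m) (hf : 2 * f < m)
    (l h : ℝ) (hl : 0 < l) (hlh : l < h)
    (D1 D2 : Fin (2 * m) → ℝ)
    (hD1 : ∀ i : Fin (2 * m), D1 i = if (i : ℕ) < m then 0 else 1)
    (hD2 : ∀ i : Fin (2 * m), D2 i = if (i : ℕ) < m then 1 else 0)
    (A : (Fin (2 * m) → ℝ) → (Fin (2 * m) → ℝ))
    (hA : ∀ v : Fin (2 * m) → ℝ,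
      A v = if (Finset.univ.filter (fun i => v i = h)).card ≤ m + f then D1 else D2)
    (OPT : (Fin (2 * m) → ℝ) → ℝ)
    (hOPT : ∀ v, OPT v = max (dot v D2) (dot v D1)) :
    (∀ v : Fin (2 * m) → ℝ, (∀ i, v i = l ∨ v i = h) →
      (l / h) * OPT v ≤ dot v (A v)) ∧
    (∃ v : Fin (2 * m) → ℝ, (∀ i, v i = l ∨ v i = h) ∧
      dot v (A v) = (l / h) * OPT v) :=
  stmt11_general m f l h hl hlh D1 D2 hD1 hD2 A hA OPT hOPT
end

section
/- Asymptotic inequality for feasibility queries in Theorem 3: for reals c > d > e > 1 and every fixed k ≥ 1, for all sufficiently large m: C(m^c, m) · C(m^c − m^e, m^d − m^e) · m^k < C(m^c, m^d), where exponents denote integer parts m^c := ⌊m^c⌋ etc. -/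
/-!
Since `C(N, D) ≥ 2 · C(N - 1, D - 1)` whenever `2D ≤ N`, removing `E = ⌊m^e⌋` elements from
both arguments of `C(N, D)` costs at least a factor `2^E`. On the other side
`C(N, m) · m^k ≤ N^m · m^k ≤ m^(c m + k) = 2^{O(m log m)}`, which is eventually below `2^E`
because `e > 1`.
-/

open Filter Asymptotics Real

namespace Nat

theorem two_mul_choose_le_choose_add_one {n r : ℕ} (h : 2 * (r + 1) ≤ n + 1) :
    2 * n.choose r ≤ (n + 1).choose (r + 1) := by
  refine Nat.le_of_mul_le_mul_right ?_ r.succ_pos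
  calc 2 * n.choose r * (r + 1) = 2 * (r + 1) * n.choose r := by ring
    _ ≤ (n + 1) * n.choose r := Nat.mul_le_mul_right _ h
    _ = (n + 1).choose (r + 1) * (r + 1) := n.add_one_mul_choose_eq r

theorem choose_mul_two_pow_le_choose_add {n r : ℕ} :
    ∀ {s : ℕ}, 2 * (r + s) ≤ n + s → n.choose r * 2 ^ s ≤ (n + s).choose (r + s)
  | 0, _ => by simp
  | s + 1, h =>
    calc n.choose r * 2 ^ (s + 1) = 2 * (n.choose r * 2 ^ s) := by ring
      _ ≤ 2 * (n + s).choose (r + s) :=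
          Nat.mul_le_mul_left _ (choose_mul_two_pow_le_choose_add (by omega))
      _ ≤ (n + s + 1).choose (r + s + 1) := two_mul_choose_le_choose_add_one (by omega)

end Nat

theorem isLittleO_linear_mul_log_rpow_atTop (a b : ℝ) {e : ℝ} (he : 1 < e) :
    (fun x : ℝ => (a * x + b) * log x) =o[atTop] fun x => x ^ e := by
  have hlin : (fun x : ℝ => a * x + b) =O[atTop] fun x => x :=
    ((isBigO_refl _ _).const_mul_left a).add (isLittleO_const_id_atTop b).isBigO
  have hx : (fun x : ℝ => x * x ^ (e - 1)) =ᶠ[atTop] fun x => x ^ e := by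
    filter_upwards [eventually_gt_atTop 0] with x hx
    rw [rpow_sub_one hx.ne', mul_div_cancel₀ _ hx.ne']
  exact (hlin.mul_isLittleO (isLittleO_log_rpow_atTop (by linarith))).trans_eventuallyEq hx

theorem eventually_rpow_linear_lt_two_rpow (a b : ℝ) {e : ℝ} (he : 1 < e) :
    ∀ᶠ x : ℝ in atTop, x ^ (a * x + b) < 2 ^ (x ^ e - 1) := by
  have hlog2 : 0 < log 2 := log_pos one_lt_two
  filter_upwards [(isLittleO_linear_mul_log_rpow_atTop a b he).def (half_pos hlog2),
    (tendsto_rpow_atTop (by linarith : 0 < e)).eventually_ge_atTop 3,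
    eventually_gt_atTop 0] with x hbound hxe hx
  rw [norm_eq_abs, norm_eq_abs, abs_of_pos (by positivity : 0 < x ^ e)] at hbound
  rw [rpow_def_of_pos hx, rpow_def_of_pos two_pos, exp_lt_exp]
  calc log x * (a * x + b) ≤ log 2 / 2 * x ^ e := by
        linarith [le_abs_self ((a * x + b) * log x)]
    _ < log 2 * (x ^ e - 1) := by nlinarith

theorem eventually_floor_rpow_pow_mul_pow_lt_two_pow (c : ℝ) {e : ℝ} (he : 1 < e)
    (k : ℕ) :
    ∀ᶠ m : ℕ in atTop, ⌊(m : ℝ) ^ c⌋₊ ^ m * m ^ k < 2 ^ ⌊(m : ℝ) ^ e⌋₊ := by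
  filter_upwards [tendsto_natCast_atTop_atTop.eventually
    (eventually_rpow_linear_lt_two_rpow c k he), eventually_gt_atTop 0] with m hlt hm
  have hm : (0 : ℝ) < m := by exact_mod_cast hm
  have hfloor : (⌊(m : ℝ) ^ c⌋₊ : ℝ) ≤ (m : ℝ) ^ c := Nat.floor_le (by positivity)
  suffices (⌊(m : ℝ) ^ c⌋₊ : ℝ) ^ m * (m : ℝ) ^ k < 2 ^ ⌊(m : ℝ) ^ e⌋₊ by
    exact_mod_cast this
  calc (⌊(m : ℝ) ^ c⌋₊ : ℝ) ^ m * (m : ℝ) ^ k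
        ≤ ((m : ℝ) ^ c) ^ m * (m : ℝ) ^ k := by gcongr
    _ = (m : ℝ) ^ (c * m + k) := by
        rw [rpow_add hm, rpow_mul hm.le, rpow_natCast, rpow_natCast]
    _ < 2 ^ ((m : ℝ) ^ e - 1) := hlt
    _ ≤ 2 ^ (⌊(m : ℝ) ^ e⌋₊ : ℝ) :=
        rpow_le_rpow_of_exponent_le one_le_two (Nat.sub_one_lt_floor _).le
    _ = 2 ^ ⌊(m : ℝ) ^ e⌋₊ := rpow_natCast _ _

theorem eventually_two_mul_floor_rpow_le_floor_rpow {c d : ℝ} (hdc : d < c) :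
    ∀ᶠ m : ℕ in atTop, 2 * ⌊(m : ℝ) ^ d⌋₊ ≤ ⌊(m : ℝ) ^ c⌋₊ := by
  filter_upwards [tendsto_natCast_atTop_atTop.eventually
    ((tendsto_rpow_atTop (sub_pos.mpr hdc)).eventually_ge_atTop 2), eventually_gt_atTop 0]
    with m h2 hm
  have hm : (0 : ℝ) < m := by exact_mod_cast hm
  apply Nat.le_floor
  push_cast
  calc 2 * (⌊(m : ℝ) ^ d⌋₊ : ℝ) ≤ (m : ℝ) ^ (c - d) * (m : ℝ) ^ d := by
        gcongr
        exact Nat.floor_le (by positivity)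
    _ = (m : ℝ) ^ c := by rw [← rpow_add hm, sub_add_cancel]

theorem stmt14_general (c d e : ℝ) (hcd : c > d) (hde : d > e) (he : e > 1)
    (k : ℕ) :
    ∃ M : ℕ, ∀ m ≥ M,
      Nat.choose ⌊(m : ℝ) ^ c⌋₊ m *
          Nat.choose (⌊(m : ℝ) ^ c⌋₊ - ⌊(m : ℝ) ^ e⌋₊)
            (⌊(m : ℝ) ^ d⌋₊ - ⌊(m : ℝ) ^ e⌋₊) * m ^ k <
        Nat.choose ⌊(m : ℝ) ^ c⌋₊ ⌊(m : ℝ) ^ d⌋₊ := by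
  refine eventually_atTop.mp ?_
  filter_upwards [eventually_two_mul_floor_rpow_le_floor_rpow hcd,
    eventually_floor_rpow_pow_mul_pow_lt_two_pow c he k, eventually_ge_atTop 1]
    with m h2DN hbig hm
  set N := ⌊(m : ℝ) ^ c⌋₊
  set D := ⌊(m : ℝ) ^ d⌋₊
  set E := ⌊(m : ℝ) ^ e⌋₊
  have hED : E ≤ D := Nat.floor_mono (rpow_le_rpow_of_exponent_le (by exact_mod_cast hm) hde.le)
  have hshift : (N - E).choose (D - E) * 2 ^ E ≤ N.choose D := by
    simpa [Nat.sub_add_cancel hED, Nat.sub_add_cancel (hED.trans (by omega : D ≤ N))] using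
      Nat.choose_mul_two_pow_le_choose_add (n := N - E) (r := D - E) (s := E) (by omega)
  calc N.choose m * (N - E).choose (D - E) * m ^ k
      ≤ (N - E).choose (D - E) * (N ^ m * m ^ k) := by
        rw [mul_comm (N.choose m), mul_assoc]
        gcongr
        exact Nat.choose_le_pow N m
    _ < (N - E).choose (D - E) * 2 ^ E :=
        Nat.mul_lt_mul_of_pos_left hbig (Nat.choose_pos (by omega))
    _ ≤ N.choose D := hshift

/-- Feasibility-query counting inequality for `h/l ∈ O(n^α)`: for reals
`c > d > e > 1` and any fixed `k`, for all sufficiently large `m`,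
`C(⌊m^c⌋, m) · C(⌊m^c⌋ - ⌊m^e⌋, ⌊m^d⌋ - ⌊m^e⌋) · m^k < C(⌊m^c⌋, ⌊m^d⌋)`. -/
theorem stmt14 (c d e : ℝ) (hcd : c > d) (hde : d > e) (he : e > 1)
    (k : ℕ) (hk : 1 ≤ k) :
    ∃ M : ℕ, ∀ m ≥ M,
      Nat.choose ⌊(m : ℝ) ^ c⌋₊ m *
          Nat.choose (⌊(m : ℝ) ^ c⌋₊ - ⌊(m : ℝ) ^ e⌋₊)
            (⌊(m : ℝ) ^ d⌋₊ - ⌊(m : ℝ) ^ e⌋₊) * m ^ k <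
        Nat.choose ⌊(m : ℝ) ^ c⌋₊ ⌊(m : ℝ) ^ d⌋₊ :=
  stmt14_general c d e hcd hde he k
end
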